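/- Let G = (V,E) be a finite directed graph with vertex weights w ≥ 0, let A ⊆ V, let x ∈ A, and let y ∈ V with y ∉ A ∪ N⁺_G(A). Let H = G^{|A} be the graph derived from G via A, with new sink vertex t (assigned weight 0). Then: (i) for every x-t vertex-cut (L'',S'',R'') of H, L'' ⊆ A holds and (L'', S'', V ∖ (L'' ∪ S'')) is an x-y vertex-cut of G of the same value w(S''); (ii) consequently, the minimum x-t vertex-cut value of H is at least the minimum x-y vertex-cut value of G; and (iii) if some minimum x-y vertex-cut (L,S,R) of G satisfies L ⊆ A, then (L, N⁺_H(L), V(H) ∖ (L ∪ N⁺_H(L))) is an x-t vertex-cut of H of value w(S), and the minimum x-t vertex-cut value of H equals the minimum x-y vertex-cut value of G. -/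

import Mathlib

open Classical Finset

variable {V : Type*}

/-- The out-neighborhood `N⁺(X)` of a vertex set `X` for an edge relation `E` on a finite
type. -/
noncomputable def outNbr {α : Type*} [Fintype α] (E : α → α → Prop) (X : Finset α) :
    Finset α :=
  Finset.univ.filter fun v => v ∉ X ∧ ∃ u ∈ X, E u v

/-- `(L, S, R)` is a vertex-cut of the directed graph with vertex set `U` and edge
relation `E`. -/
def IsCutOn {α : Type*} [DecidableEq α] (E : α → α → Prop) (U L S R : Finset α) : Prop :=
  L ≠ ∅ ∧ R ≠ ∅ ∧ Disjoint L S ∧ Disjoint L R ∧ Disjoint S R ∧ L ∪ S ∪ R = U ∧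
    ∀ u ∈ L, ∀ v ∈ R, ¬ E u v

/-- The edge relation of the graph `H = G^{|A}` derived from `G` via `A`; the new sink vertex
`t` is represented by `none`, and each `v ∈ V` by `some v`. Its edges are
`{(u,v) ∈ E : u ∈ A}` together with `{(u,t) : u ∈ N⁺_G(A)}`. -/
def derE [Fintype V] (E : V → V → Prop) (A : Finset V) : Option V → Option V → Prop
  | some u, some v => u ∈ A ∧ E u v
  | some u, none => u ∈ outNbr E A
  | _, _ => False

lemma mem_outNbr {α : Type*} [Fintype α] {E : α → α → Prop} {X : Finset α} {v : α} :
    v ∈ outNbr E X ↔ v ∉ X ∧ ∃ u ∈ X, E u v := by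
  simp [outNbr]

/-- Properties of the graph `H = G^{|A}` derived from `G` via `A` (with new sink `t = none`,
vertex set `UH = A ∪ N⁺(A) ∪ {t}`, and weights `wH` extending `w` by `wH(t) = 0`), where
`x ∈ A` and `y ∉ A ∪ N⁺(A)`:
(i) every `x`-`t` vertex-cut `(L'',S'',R'')` of `H` satisfies `L'' ⊆ A`, and (viewing `L''`
and `S''` as subsets `L₀, S₀` of `V`) `(L₀, S₀, V \ (L₀ ∪ S₀))` is an `x`-`y` vertex-cut of
`G` of the same value;
(ii) consequently, the value of every `x`-`t` vertex-cut of `H` is at least the minimum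
`x`-`y` vertex-cut value of `G`;
(iii) if some minimum `x`-`y` vertex-cut `(L,S,R)` of `G` satisfies `L ⊆ A`, then
`(L, N⁺_H(L), V(H) \ (L ∪ N⁺_H(L)))` is an `x`-`t` vertex-cut of `H` of value `w(S)`, and the
minimum `x`-`t` vertex-cut value of `H` equals the minimum `x`-`y` vertex-cut value `w(S)`
of `G`. -/
theorem stmt_18 [Fintype V] [DecidableEq V] (E : V → V → Prop) (w : V → ℝ)
    (hw : ∀ v, 0 ≤ w v) (A : Finset V) (x y : V) (hx : x ∈ A)
    (hy : y ∉ A ∪ outNbr E A) :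
    ∀ UH : Finset (Option V), UH = insert none ((A ∪ outNbr E A).image some) →
    ∀ wH : Option V → ℝ, wH = (fun o => o.elim 0 w) →
      -- (i)
      ((∀ L'' S'' R'' : Finset (Option V),
          IsCutOn (derE E A) UH L'' S'' R'' → some x ∈ L'' → none ∈ R'' →
          ∀ L₀ S₀ : Finset V,
            L₀ = Finset.univ.filter (fun v => some v ∈ L'') →
            S₀ = Finset.univ.filter (fun v => some v ∈ S'') →
            L'' ⊆ A.image some ∧
            IsCutOn E Finset.univ L₀ S₀ (Finset.univ \ (L₀ ∪ S₀)) ∧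
            x ∈ L₀ ∧ y ∈ Finset.univ \ (L₀ ∪ S₀) ∧
            ∑ v ∈ S₀, w v = ∑ o ∈ S'', wH o) ∧
      -- (ii)
      (∀ L'' S'' R'' : Finset (Option V),
          IsCutOn (derE E A) UH L'' S'' R'' → some x ∈ L'' → none ∈ R'' →
          ∀ L S R : Finset V, IsCutOn E Finset.univ L S R → x ∈ L → y ∈ R →
            (∀ L' S' R' : Finset V, IsCutOn E Finset.univ L' S' R' → x ∈ L' → y ∈ R' →
              ∑ v ∈ S, w v ≤ ∑ v ∈ S', w v) →
            ∑ v ∈ S, w v ≤ ∑ o ∈ S'', wH o) ∧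
      -- (iii)
      (∀ L S R : Finset V, IsCutOn E Finset.univ L S R → x ∈ L → y ∈ R →
          (∀ L' S' R' : Finset V, IsCutOn E Finset.univ L' S' R' → x ∈ L' → y ∈ R' →
            ∑ v ∈ S, w v ≤ ∑ v ∈ S', w v) →
          L ⊆ A →
          ∀ LH SH : Finset (Option V),
            LH = L.image some → SH = outNbr (derE E A) LH →
            IsCutOn (derE E A) UH LH SH (UH \ (LH ∪ SH)) ∧
            some x ∈ LH ∧ none ∈ UH \ (LH ∪ SH) ∧
            (∑ o ∈ SH, wH o) = ∑ v ∈ S, w v ∧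
            ∀ L'' S'' R'' : Finset (Option V),
              IsCutOn (derE E A) UH L'' S'' R'' → some x ∈ L'' → none ∈ R'' →
              ∑ v ∈ S, w v ≤ ∑ o ∈ S'', wH o)) := by
  intro UH hUH wH hwH
  subst hUH; subst hwH
  classical
  -- Part (i) core
  have key1 : ∀ L'' S'' R'' : Finset (Option V),
      IsCutOn (derE E A) (insert none ((A ∪ outNbr E A).image some)) L'' S'' R'' →
      some x ∈ L'' → none ∈ R'' →
      L'' ⊆ A.image some ∧
      IsCutOn E Finset.univ (Finset.univ.filter (fun v => some v ∈ L''))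
        (Finset.univ.filter (fun v => some v ∈ S''))
        (Finset.univ \ (Finset.univ.filter (fun v => some v ∈ L'') ∪
          Finset.univ.filter (fun v => some v ∈ S''))) ∧
      x ∈ Finset.univ.filter (fun v => some v ∈ L'') ∧
      y ∈ Finset.univ \ (Finset.univ.filter (fun v => some v ∈ L'') ∪
          Finset.univ.filter (fun v => some v ∈ S'')) ∧
      ∑ v ∈ Finset.univ.filter (fun v => some v ∈ S''), w v
        = ∑ o ∈ S'', (fun o => Option.elim o 0 w) o := by
    intro L'' S'' R'' hc hxL hnR
    obtain ⟨hLne, hRne, hLS, hLR, hSR, hU, hE⟩ := hc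
    set L₀ := Finset.univ.filter (fun v => some v ∈ L'') with hL₀
    set S₀ := Finset.univ.filter (fun v => some v ∈ S'') with hS₀
    have hmemU : ∀ o : Option V, o ∈ L'' ∪ S'' ∪ R'' ↔
        o ∈ insert none ((A ∪ outNbr E A).image some) := by intro o; rw [hU]
    have hLA : L'' ⊆ A.image some := by
      intro o ho
      have hoU := (hmemU o).1 (by simp [ho])
      rcases Finset.mem_insert.1 hoU with h | h
      · subst h
        exact absurd hnR (Finset.disjoint_left.1 hLR ho)
      · obtain ⟨v, hv, rfl⟩ := Finset.mem_image.1 h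
        rcases Finset.mem_union.1 hv with hvA | hvN
        · exact Finset.mem_image.2 ⟨v, hvA, rfl⟩
        · exact absurd (show derE E A (some v) none from hvN) (hE _ ho none hnR)
    have hUmem : ∀ v : V, v ∈ A ∪ outNbr E A →
        some v ∈ L'' ∨ some v ∈ S'' ∨ some v ∈ R'' := by
      intro v hv
      have h1 : some v ∈ L'' ∪ S'' ∪ R'' :=
        (hmemU _).2 (Finset.mem_insert_of_mem (Finset.mem_image.2 ⟨v, hv, rfl⟩))
      simpa [Finset.mem_union, or_assoc] using h1
    have hyn : y ∉ L₀ ∪ S₀ := by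
      intro hyy
      have h1 : some y ∈ L'' ∪ S'' ∪ R'' := by
        rcases Finset.mem_union.1 hyy with h | h
        · exact Finset.mem_union_left _ (Finset.mem_union_left _ ((Finset.mem_filter.1 h).2))
        · exact Finset.mem_union_left _ (Finset.mem_union_right _ ((Finset.mem_filter.1 h).2))
      have h2 := (hmemU _).1 h1
      rcases Finset.mem_insert.1 h2 with h | h
      · exact Option.some_ne_none _ h
      · obtain ⟨v, hv, hv2⟩ := Finset.mem_image.1 h
        cases Option.some.inj hv2
        exact hy hv
    have hnoE : ∀ u ∈ L₀, ∀ v ∈ Finset.univ \ (L₀ ∪ S₀), ¬ E u v := by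
      intro u hu v hvR huv
      have huL : some u ∈ L'' := (Finset.mem_filter.1 hu).2
      have huA : u ∈ A := by
        obtain ⟨u', hu', h⟩ := Finset.mem_image.1 (hLA huL)
        cases Option.some.inj h; exact hu'
      have hvAN : v ∈ A ∪ outNbr E A := by
        by_cases hvA : v ∈ A
        · exact Finset.mem_union_left _ hvA
        · refine Finset.mem_union_right _ ?_
          exact mem_outNbr.2 ⟨hvA, u, huA, huv⟩
      have hvn := Finset.mem_sdiff.1 hvR
      rcases hUmem v hvAN with h | h | h
      · exact hvn.2 (Finset.mem_union_left _
          (Finset.mem_filter.2 ⟨Finset.mem_univ _, h⟩))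
      · exact hvn.2 (Finset.mem_union_right _
          (Finset.mem_filter.2 ⟨Finset.mem_univ _, h⟩))
      · exact hE _ huL _ h (show derE E A (some u) (some v) from ⟨huA, huv⟩)
    have hSim : S'' = S₀.image some := by
      ext o
      constructor
      · intro ho
        have hoU := (hmemU o).1 (by simp [ho])
        rcases Finset.mem_insert.1 hoU with h | h
        · subst h
          exact absurd ho (Finset.disjoint_right.1 hSR hnR)
        · obtain ⟨v, hv, rfl⟩ := Finset.mem_image.1 h
          exact Finset.mem_image.2 ⟨v, Finset.mem_filter.2 ⟨Finset.mem_univ _, ho⟩, rfl⟩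
      · intro ho
        obtain ⟨v, hv, rfl⟩ := Finset.mem_image.1 ho
        exact (Finset.mem_filter.1 hv).2
    have hsum : ∑ v ∈ S₀, w v = ∑ o ∈ S'', (fun o => Option.elim o 0 w) o := by
      rw [hSim, Finset.sum_image (fun a _ b _ h => Option.some.inj h)]
      simp
    refine ⟨hLA, ⟨?_, ?_, ?_, ?_, ?_, ?_, hnoE⟩, ?_, ?_, hsum⟩
    · exact Finset.ne_empty_of_mem (Finset.mem_filter.2 ⟨Finset.mem_univ _, hxL⟩)
    · exact Finset.ne_empty_of_mem (Finset.mem_sdiff.2 ⟨Finset.mem_univ _, hyn⟩)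
    · rw [Finset.disjoint_left]
      intro v hv hv'
      exact Finset.disjoint_left.1 hLS (Finset.mem_filter.1 hv).2 (Finset.mem_filter.1 hv').2
    · rw [Finset.disjoint_left]
      intro v hv hv'
      exact (Finset.mem_sdiff.1 hv').2 (Finset.mem_union_left _ hv)
    · rw [Finset.disjoint_left]
      intro v hv hv'
      exact (Finset.mem_sdiff.1 hv').2 (Finset.mem_union_right _ hv)
    · exact Finset.union_sdiff_of_subset (Finset.subset_univ _)
    · exact Finset.mem_filter.2 ⟨Finset.mem_univ _, hxL⟩
    · exact Finset.mem_sdiff.2 ⟨Finset.mem_univ _, hyn⟩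
  -- Part (ii) core
  have key2 : ∀ L'' S'' R'' : Finset (Option V),
      IsCutOn (derE E A) (insert none ((A ∪ outNbr E A).image some)) L'' S'' R'' →
      some x ∈ L'' → none ∈ R'' →
      ∀ L S R : Finset V, IsCutOn E Finset.univ L S R → x ∈ L → y ∈ R →
        (∀ L' S' R' : Finset V, IsCutOn E Finset.univ L' S' R' → x ∈ L' → y ∈ R' →
          ∑ v ∈ S, w v ≤ ∑ v ∈ S', w v) →
        ∑ v ∈ S, w v ≤ ∑ o ∈ S'', (fun o => Option.elim o 0 w) o := by
    intro L'' S'' R'' hc hxL hnR L S R hcut hxL' hyR hmin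
    obtain ⟨-, hGcut, hx0, hy0, hsum⟩ := key1 L'' S'' R'' hc hxL hnR
    calc ∑ v ∈ S, w v ≤ _ := hmin _ _ _ hGcut hx0 hy0
      _ = _ := hsum
  refine ⟨?_, key2, ?_⟩
  · intro L'' S'' R'' hc hxL hnR L₀ S₀ hL₀ hS₀
    subst hL₀; subst hS₀
    exact key1 _ _ _ hc hxL hnR
  -- Part (iii)
  intro L S R hcut hxL hyR hmin hLsubA LH SH hLH hSH
  subst hLH; subst hSH
  have hcut' := hcut
  obtain ⟨hLne, hRne, hLS, hLR, hSR, hU, hE⟩ := hcut'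
  have hyL : y ∉ L := Finset.disjoint_right.1 hLR hyR
  have hyS : y ∉ S := Finset.disjoint_right.1 hSR hyR
  have hNS : outNbr E L ⊆ S := by
    intro v hv
    rw [mem_outNbr] at hv
    obtain ⟨hvL, u, huL, huv⟩ := hv
    have hvR : v ∉ R := fun h => hE u huL v h huv
    have h1 : v ∈ L ∪ S ∪ R := by rw [hU]; exact Finset.mem_univ v
    simp only [Finset.mem_union, hvL, hvR, or_false, false_or] at h1
    exact h1
  have hyR' : y ∈ Finset.univ \ (L ∪ outNbr E L) := by
    refine Finset.mem_sdiff.2 ⟨Finset.mem_univ _, ?_⟩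
    intro h
    rcases Finset.mem_union.1 h with h | h
    · exact hyL h
    · exact hyS (hNS h)
  have hcut2 : IsCutOn E Finset.univ L (outNbr E L) (Finset.univ \ (L ∪ outNbr E L)) := by
    refine ⟨hLne, Finset.ne_empty_of_mem hyR', ?_, ?_, ?_, ?_, ?_⟩
    · rw [Finset.disjoint_left]
      intro v hv hv'
      exact (mem_outNbr.1 hv').1 hv
    · rw [Finset.disjoint_left]
      intro v hv hv'
      exact (Finset.mem_sdiff.1 hv').2 (Finset.mem_union_left _ hv)
    · rw [Finset.disjoint_left]
      intro v hv hv'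
      exact (Finset.mem_sdiff.1 hv').2 (Finset.mem_union_right _ hv)
    · exact Finset.union_sdiff_of_subset (Finset.subset_univ _)
    · intro u hu v hv huv
      by_cases hvL : v ∈ L
      · exact (Finset.mem_sdiff.1 hv).2 (Finset.mem_union_left _ hvL)
      · refine (Finset.mem_sdiff.1 hv).2 (Finset.mem_union_right _ ?_)
        exact mem_outNbr.2 ⟨hvL, u, hu, huv⟩
  have hle1 : ∑ v ∈ S, w v ≤ ∑ v ∈ outNbr E L, w v := hmin _ _ _ hcut2 hxL hyR'
  have hle2 : ∑ v ∈ outNbr E L, w v ≤ ∑ v ∈ S, w v :=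
    Finset.sum_le_sum_of_subset_of_nonneg hNS (fun v _ _ => hw v)
  have hNsum : ∑ v ∈ outNbr E L, w v = ∑ v ∈ S, w v := le_antisymm hle2 hle1
  have hSHeq : outNbr (derE E A) (L.image some) = (outNbr E L).image some := by
    ext o
    rw [mem_outNbr]
    constructor
    · rintro ⟨hoL, u', hu', hder⟩
      obtain ⟨u, huL, rfl⟩ := Finset.mem_image.1 hu'
      match o with
      | none =>
        exfalso
        have h1 : u ∈ outNbr E A := hder
        exact (mem_outNbr.1 h1).1 (hLsubA huL)
      | some v =>
        obtain ⟨huA, huv⟩ := (hder : u ∈ A ∧ E u v)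
        refine Finset.mem_image.2 ⟨v, ?_, rfl⟩
        exact mem_outNbr.2
          ⟨fun hvL => hoL (Finset.mem_image.2 ⟨v, hvL, rfl⟩), u, huL, huv⟩
    · intro ho
      obtain ⟨v, hv, rfl⟩ := Finset.mem_image.1 ho
      rw [mem_outNbr] at hv
      obtain ⟨hvL, u, huL, huv⟩ := hv
      refine ⟨?_, some u, Finset.mem_image.2 ⟨u, huL, rfl⟩,
        show derE E A (some u) (some v) from ⟨hLsubA huL, huv⟩⟩
      intro h
      obtain ⟨v', hv', hvv⟩ := Finset.mem_image.1 h
      cases Option.some.inj hvv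
      exact hvL hv'
  have hSHsum : ∑ o ∈ outNbr (derE E A) (L.image some), (fun o => Option.elim o 0 w) o
      = ∑ v ∈ S, w v := by
    rw [hSHeq, Finset.sum_image (fun a _ b _ h => Option.some.inj h)]
    exact hNsum
  have hLHU : L.image some ⊆ insert none ((A ∪ outNbr E A).image some) := by
    intro o ho
    obtain ⟨v, hv, rfl⟩ := Finset.mem_image.1 ho
    exact Finset.mem_insert_of_mem
      (Finset.mem_image.2 ⟨v, Finset.mem_union_left _ (hLsubA hv), rfl⟩)
  have hSHU : outNbr (derE E A) (L.image some) ⊆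
      insert none ((A ∪ outNbr E A).image some) := by
    rw [hSHeq]
    intro o ho
    obtain ⟨v, hv, rfl⟩ := Finset.mem_image.1 ho
    apply Finset.mem_insert_of_mem
    refine Finset.mem_image.2 ⟨v, ?_, rfl⟩
    rw [mem_outNbr] at hv
    obtain ⟨hvL, u, huL, huv⟩ := hv
    by_cases hvA : v ∈ A
    · exact Finset.mem_union_left _ hvA
    · exact Finset.mem_union_right _ (mem_outNbr.2 ⟨hvA, u, hLsubA huL, huv⟩)
  have hnLH : none ∉ L.image some := by simp
  have hnSH : none ∉ outNbr (derE E A) (L.image some) := by rw [hSHeq]; simp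
  have hnRH : none ∈ insert none ((A ∪ outNbr E A).image some) \
      (L.image some ∪ outNbr (derE E A) (L.image some)) := by
    refine Finset.mem_sdiff.2 ⟨Finset.mem_insert_self _ _, ?_⟩
    intro h
    rcases Finset.mem_union.1 h with h | h
    · exact hnLH h
    · exact hnSH h
  have hxLH : some x ∈ L.image some := Finset.mem_image.2 ⟨x, hxL, rfl⟩
  refine ⟨⟨?_, ?_, ?_, ?_, ?_, ?_, ?_⟩, hxLH, hnRH, hSHsum, ?_⟩
  · exact Finset.ne_empty_of_mem hxLH
  · exact Finset.ne_empty_of_mem hnRH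
  · rw [Finset.disjoint_left]
    intro o ho ho'
    exact (mem_outNbr.1 ho').1 ho
  · rw [Finset.disjoint_left]
    intro o ho ho'
    exact (Finset.mem_sdiff.1 ho').2 (Finset.mem_union_left _ ho)
  · rw [Finset.disjoint_left]
    intro o ho ho'
    exact (Finset.mem_sdiff.1 ho').2 (Finset.mem_union_right _ ho)
  · exact Finset.union_sdiff_of_subset (Finset.union_subset hLHU hSHU)
  · intro u' hu' o ho hder
    have hoS : o ∈ L.image some ∪ outNbr (derE E A) (L.image some) := by
      by_cases hoL : o ∈ L.image some
      · exact Finset.mem_union_left _ hoL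
      · exact Finset.mem_union_right _ (mem_outNbr.2 ⟨hoL, u', hu', hder⟩)
    exact (Finset.mem_sdiff.1 ho).2 hoS
  · intro L'' S'' R'' hc hxl hnr
    exact key2 L'' S'' R'' hc hxl hnr L S R hcut hxL hyR hmin
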